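/- arXiv:2105.03849 — 11 statements merged into one kernel-verified Lean document; each statement's English description precedes it below -/
import Mathlib

section
/- (Critical point CP₅.) Assume λ_V > 0 and let A be a real number with 0 ≤ A ≤ 2 satisfying the quadratic equation (D−1)(3−w_m)A² − 2[(D−1)(1+w_m) + (D−2)λ_V²]A + 2(D−2)(1+w_m)λ_V² = 0 (whose two roots are the quantities A₊ and A₋ of the paper). Then the point (x_c, y_c, 0) with x_c = (A/λ_V)·√((D−1)/(D−2)) and y_c = (1/λ_V)·√((D−1)(2−A)A/(2(D−2))) is a critical point of the cosmological autonomous system, i.e. G(x_c, y_c, 0) = 0. -/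
/-- The cosmological vector field `G = (G₁, G₂, G₃)` on `ℝ³ = ℝ × ℝ × ℝ`,
with `k = √((D−2)/(D−1))`. -/
noncomputable def G (D : ℕ) (wm lV lW f1 f2 : ℝ) (p : ℝ × ℝ × ℝ) : ℝ × ℝ × ℝ :=
  let k := Real.sqrt (((D : ℝ) - 2) / ((D : ℝ) - 1))
  ((1 - wm) * p.1 ^ 3 - (1 + wm) * p.1 * p.2.1 ^ 2 - (f2 + wm * f1) * p.1 * p.2.2 ^ 2
      - (1 - wm) * p.1 + 2 * k * (lV * p.2.1 ^ 2 + lW * f1 * p.2.2 ^ 2),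
   (1 + wm) * p.2.1 + (1 - wm) * p.1 ^ 2 * p.2.1 - (1 + wm) * p.2.1 ^ 3
      - (f2 + wm * f1) * p.2.1 * p.2.2 ^ 2 - k * lV * p.1 * p.2.1,
   (1 + wm) * p.2.2 + (1 - wm) * p.1 ^ 2 * p.2.2 - (1 + wm) * p.2.1 ^ 2 * p.2.2
      - (f2 + wm * f1) * p.2.2 ^ 3 - k * lW * p.1 * p.2.2)

/-!
On the plane `z = 0` the third component of `G` vanishes, the second is `y · E` with
`E = (1 + w) + (1 - w)x² - (1 + w)y² - kλx`, and modulo `E` the first is `kλ(x² + 2y²) - 2x`.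
So a point of that plane is critical once it lies on both conics `E = 0` and `kλ(x² + 2y²) = 2x`.
For CP₅, `k = 1 / √((D - 1)/(D - 2))` gives `kλx = A`, which puts the point on the second conic
for every `A`; on the first, `2(D - 2)λ² E` is exactly the quadratic defining `A`.
-/

theorem G_eq_zero_of_conic_of_ellipse (D : ℕ) (wm lV lW f1 f2 x y : ℝ)
    (hconic : (1 + wm) + (1 - wm) * x ^ 2 - (1 + wm) * y ^ 2
      - Real.sqrt (((D : ℝ) - 2) / ((D : ℝ) - 1)) * lV * x = 0)
    (hellipse : Real.sqrt (((D : ℝ) - 2) / ((D : ℝ) - 1)) * lV * (x ^ 2 + 2 * y ^ 2) = 2 * x) :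
    G D wm lV lW f1 f2 (x, y, 0) = 0 := by
  simp only [G, Prod.mk_eq_zero]
  exact ⟨by linear_combination x * hconic + hellipse, by linear_combination y * hconic, by ring⟩

theorem Real.sqrt_mul_sqrt_div_swap {a b : ℝ} (h : 0 < a / b) :
    Real.sqrt (a / b) * Real.sqrt (b / a) = 1 := by
  rw [← inv_div a b, Real.sqrt_inv]
  exact mul_inv_cancel₀ (Real.sqrt_pos.mpr h).ne'

section CP5

variable {d wm lV A k c s : ℝ}

theorem cp5_mem_conic (hd : d - 2 ≠ 0) (hlV : lV ≠ 0) (hkc : k * c = 1)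
    (hc : c ^ 2 * (d - 2) = d - 1) (hs : 2 * (d - 2) * s ^ 2 = (d - 1) * (2 - A) * A)
    (hquad : (d - 1) * (3 - wm) * A ^ 2 - 2 * ((d - 1) * (1 + wm) + (d - 2) * lV ^ 2) * A
        + 2 * (d - 2) * (1 + wm) * lV ^ 2 = 0) :
    (1 + wm) + (1 - wm) * (A / lV * c) ^ 2 - (1 + wm) * (1 / lV * s) ^ 2
      - k * lV * (A / lV * c) = 0 := by
  field_simp
  refine mul_left_cancel₀ hd ?_
  linear_combination (A ^ 2 * (1 - wm)) * hc - (1 + wm) / 2 * hs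
    - ((d - 2) * A * lV ^ 2) * hkc + hquad / 2

theorem cp5_mem_ellipse (hd : d - 2 ≠ 0) (hlV : lV ≠ 0) (hkc : k * c = 1)
    (hc : c ^ 2 * (d - 2) = d - 1) (hs : 2 * (d - 2) * s ^ 2 = (d - 1) * (2 - A) * A) :
    k * lV * ((A / lV * c) ^ 2 + 2 * (1 / lV * s) ^ 2) = 2 * (A / lV * c) := by
  field_simp
  refine mul_left_cancel₀ hd ?_
  linear_combination (k * A ^ 2 - 2 * k * A) * hc + k * hs + (2 * c * A * (d - 2)) * hkc

end CP5

/-- CP₅ is a critical point of the system. -/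
theorem CP5_critical (D : ℕ) (hD : 4 ≤ D) (wm lV lW f1 f2 : ℝ)
    (hlV : 0 < lV) (A : ℝ) (hA0 : 0 ≤ A) (hA2 : A ≤ 2)
    (hquad : ((D : ℝ) - 1) * (3 - wm) * A ^ 2
        - 2 * (((D : ℝ) - 1) * (1 + wm) + ((D : ℝ) - 2) * lV ^ 2) * A
        + 2 * ((D : ℝ) - 2) * (1 + wm) * lV ^ 2 = 0) :
    G D wm lV lW f1 f2
      ((A / lV) * Real.sqrt (((D : ℝ) - 1) / ((D : ℝ) - 2)),
       (1 / lV) * Real.sqrt (((D : ℝ) - 1) * (2 - A) * A / (2 * ((D : ℝ) - 2))),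
       0) = 0 := by
  have hD' : (4 : ℝ) ≤ D := by exact_mod_cast hD
  have hd2 : (0 : ℝ) < D - 2 := by linarith
  have hd1 : (0 : ℝ) < D - 1 := by linarith
  have hkc := Real.sqrt_mul_sqrt_div_swap (div_pos hd2 hd1)
  have hc : Real.sqrt (((D : ℝ) - 1) / (D - 2)) ^ 2 * (D - 2) = D - 1 := by
    rw [Real.sq_sqrt (by positivity)]
    field_simp
  have hs : 2 * ((D : ℝ) - 2) * Real.sqrt ((D - 1) * (2 - A) * A / (2 * (D - 2))) ^ 2
      = (D - 1) * (2 - A) * A := by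
    rw [Real.sq_sqrt (div_nonneg (mul_nonneg (mul_nonneg hd1.le (by linarith)) hA0)
      (by positivity))]
    field_simp
  exact G_eq_zero_of_conic_of_ellipse D wm lV lW f1 f2 _ _
    (cp5_mem_conic hd2.ne' hlV.ne' hkc hc hs hquad) (cp5_mem_ellipse hd2.ne' hlV.ne' hkc hc hs)
end

section
/- (Critical point CP₆.) Assume 0 ≤ λ_V < λ_W and f₁ = f₂ < 0. Then the point (0, y_c, z_c) with y_c = √(λ_W/(λ_W − λ_V)) and z_c = √(λ_V/(|f₁|(λ_W − λ_V))) is a critical point of the cosmological autonomous system, i.e. G(0, y_c, z_c) = 0. -/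
/-!
On the plane `x = 0` with `f₁ = f₂`, the field vanishes as soon as `(Y, F) = (y², f₁ z²)` solves
the linear system `λ_V Y + λ_W F = 0`, `Y + F = 1`. Its solution `Y = λ_W / (λ_W - λ_V)`,
`F = -λ_V / (λ_W - λ_V)` is realised by CP₆ because `0 ≤ λ_V < λ_W` and `f₁ < 0` make both
radicands nonnegative.
-/

theorem G_zero_fst_apply (D : ℕ) (wm lV lW f y z : ℝ) :
    G D wm lV lW f f (0, y, z) =
      (2 * √(((D : ℝ) - 2) / ((D : ℝ) - 1)) * (lV * y ^ 2 + lW * f * z ^ 2),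
       (1 + wm) * y * (1 - y ^ 2 - f * z ^ 2),
       (1 + wm) * z * (1 - y ^ 2 - f * z ^ 2)) := by
  simp only [G, Prod.mk.injEq]
  exact ⟨by ring, by ring, by ring⟩

theorem G_zero_fst_eq_zero {D : ℕ} {wm lV lW f y z : ℝ}
    (hbalance : lV * y ^ 2 + lW * f * z ^ 2 = 0) (hsum : y ^ 2 + f * z ^ 2 = 1) :
    G D wm lV lW f f (0, y, z) = 0 := by
  rw [G_zero_fst_apply, hbalance, show 1 - y ^ 2 - f * z ^ 2 = 0 by linarith]
  simp

theorem CP6_critical_general (D : ℕ) (wm lV lW f1 f2 : ℝ)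
    (hlV : 0 ≤ lV) (hlt : lV < lW) (hf : f1 = f2) (hf1 : f1 < 0) :
    G D wm lV lW f1 f2
      (0, Real.sqrt (lW / (lW - lV)), Real.sqrt (lV / (|f1| * (lW - lV)))) = 0 := by
  subst hf
  have hgap : 0 < lW - lV := sub_pos.2 hlt
  have hy : Real.sqrt (lW / (lW - lV)) ^ 2 = lW / (lW - lV) :=
    Real.sq_sqrt (div_nonneg (by linarith) hgap.le)
  have hz : f1 * Real.sqrt (lV / (|f1| * (lW - lV))) ^ 2 = -lV / (lW - lV) := by
    rw [Real.sq_sqrt (by positivity), abs_of_neg hf1]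
    field_simp [hf1.ne]
  apply G_zero_fst_eq_zero
  · rw [hy, mul_assoc, hz]
    field_simp
    ring
  · rw [hy, hz]
    field_simp
    ring

/-- CP₆ is a critical point when `0 ≤ λ_V < λ_W` and `f₁ = f₂ < 0`. -/
theorem CP6_critical (D : ℕ) (hD : 4 ≤ D) (wm lV lW f1 f2 : ℝ)
    (hlV : 0 ≤ lV) (hlt : lV < lW) (hf : f1 = f2) (hf1 : f1 < 0) :
    G D wm lV lW f1 f2
      (0, Real.sqrt (lW / (lW - lV)), Real.sqrt (lV / (|f1| * (lW - lV)))) = 0 :=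
  CP6_critical_general D wm lV lW f1 f2 hlV hlt hf hf1
end

section
/- (Critical point family CP₇.) Assume λ_V = λ_W = 0 and f₁ = f₂ > 0. Then for every real number c with f₁ c² ≤ 1, the point (0, √(1 − f₁ c²), c) is a critical point of the cosmological autonomous system, i.e. G(0, √(1 − f₁ c²), c) = 0. -/
theorem G_zero_zero_self_eq_smul (D : ℕ) (wm f y z : ℝ) :
    G D wm 0 0 f f (0, y, z) = ((1 + wm) * (1 - y ^ 2 - f * z ^ 2)) • (0, y, z) := by
  simp only [G, Prod.smul_mk, smul_eq_mul, Prod.mk.injEq]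
  exact ⟨by ring, by ring, by ring⟩

theorem G_zero_zero_self_eq_zero_of_sq_add_mul_sq_eq_one (D : ℕ) (wm f y z : ℝ)
    (h : y ^ 2 + f * z ^ 2 = 1) : G D wm 0 0 f f (0, y, z) = 0 := by
  rw [G_zero_zero_self_eq_smul, show 1 - y ^ 2 - f * z ^ 2 = 0 by linarith, mul_zero,
    zero_smul]

theorem CP7_critical_general (D : ℕ) (wm lV lW f1 f2 : ℝ)
    (hlV : lV = 0) (hlW : lW = 0) (hf : f1 = f2)
    (c : ℝ) (hc : f1 * c ^ 2 ≤ 1) :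
    G D wm lV lW f1 f2 (0, Real.sqrt (1 - f1 * c ^ 2), c) = 0 := by
  subst hlV hlW hf
  apply G_zero_zero_self_eq_zero_of_sq_add_mul_sq_eq_one
  rw [Real.sq_sqrt (by linarith)]
  ring

/-- CP₇ family: for `λ_V = λ_W = 0`, `f₁ = f₂ > 0` and `f₁ c² ≤ 1`,
every point `(0, √(1 − f₁ c²), c)` is a critical point. -/
theorem CP7_critical (D : ℕ) (hD : 4 ≤ D) (wm lV lW f1 f2 : ℝ)
    (hlV : lV = 0) (hlW : lW = 0) (hf : f1 = f2) (hf1 : 0 < f1)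
    (c : ℝ) (hc : f1 * c ^ 2 ≤ 1) :
    G D wm lV lW f1 f2 (0, Real.sqrt (1 - f1 * c ^ 2), c) = 0 :=
  CP7_critical_general D wm lV lW f1 f2 hlV hlW hf c hc
end

section
/- (Critical point CP₈.) Assume λ_W > 0, f₁ = f₂ > 0, and let B be a real number with 0 ≤ B ≤ 2 satisfying the quadratic equation (D−1)(3−w_m)B² − 2[(D−1)(1+w_m) + (D−2)λ_W²]B + 2(D−2)(1+w_m)λ_W² = 0 (whose two roots are the quantities B₊ and B₋ of the paper). Then the point (x_c, 0, z_c) with x_c = (B/λ_W)·√((D−1)/(D−2)) and z_c = (1/λ_W)·√((D−1)(2−B)B/(2(D−2)f₁)) is a critical point of the cosmological autonomous system, i.e. G(x_c, 0, z_c) = 0. -/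
theorem G_mk_zero_eq_zero {D : ℕ} {wm lV lW f x z B : ℝ}
    (hx : √(((D : ℝ) - 2) / ((D : ℝ) - 1)) * lW * x = B)
    (hz : 2 * √(((D : ℝ) - 2) / ((D : ℝ) - 1)) * lW * (f * z ^ 2) = (2 - B) * x)
    (hE : (1 + wm) * (1 - f * z ^ 2) + (1 - wm) * x ^ 2 = B) :
    G D wm lV lW f f (x, 0, z) = 0 := by
  refine Prod.ext ?_ (Prod.ext ?_ ?_) <;> simp only [G, Prod.fst_zero, Prod.snd_zero]
  · linear_combination x * hE + hz
  · ring
  · linear_combination z * hE - z * hx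

/-- CP₈ is a critical point of the system. -/
theorem CP8_critical (D : ℕ) (hD : 4 ≤ D) (wm lV lW f1 f2 : ℝ)
    (hlW : 0 < lW) (hf : f1 = f2) (hf1 : 0 < f1)
    (B : ℝ) (hB0 : 0 ≤ B) (hB2 : B ≤ 2)
    (hquad : ((D : ℝ) - 1) * (3 - wm) * B ^ 2
        - 2 * (((D : ℝ) - 1) * (1 + wm) + ((D : ℝ) - 2) * lW ^ 2) * B
        + 2 * ((D : ℝ) - 2) * (1 + wm) * lW ^ 2 = 0) :
    G D wm lV lW f1 f2
      ((B / lW) * Real.sqrt (((D : ℝ) - 1) / ((D : ℝ) - 2)),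
       0,
       (1 / lW) * Real.sqrt (((D : ℝ) - 1) * (2 - B) * B / (2 * ((D : ℝ) - 2) * f1))) = 0 := by
  subst hf
  have hD4 : (4 : ℝ) ≤ D := by exact_mod_cast hD
  have hd1 : (0 : ℝ) < D - 1 := by linarith
  have hd2 : (0 : ℝ) < D - 2 := by linarith
  set S := √(((D : ℝ) - 1) / (D - 2))
  have hS_sq : S ^ 2 = (D - 1) / (D - 2) := Real.sq_sqrt (div_pos hd1 hd2).le
  have hS_pos : 0 < S := Real.sqrt_pos.mpr (div_pos hd1 hd2)
  have hk : √(((D : ℝ) - 2) / (D - 1)) = S⁻¹ := by rw [← inv_div, Real.sqrt_inv]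
  have hZ_sq : √((D - 1) * (2 - B) * B / (2 * (D - 2) * f1)) ^ 2
      = (D - 1) * (2 - B) * B / (2 * (D - 2) * f1) :=
    Real.sq_sqrt <| div_nonneg
      (mul_nonneg (mul_nonneg hd1.le (sub_nonneg.mpr hB2)) hB0) (by positivity)
  apply G_mk_zero_eq_zero (B := B)
  · rw [hk]
    field_simp
  · rw [hk, mul_pow, hZ_sq]
    field_simp
    rw [hS_sq]
    field_simp
  · rw [mul_pow, mul_pow, hZ_sq, hS_sq]
    field_simp
    linear_combination hquad
end

section
/- (Linearization at CP₂ and CP₃.) The total derivative of G at the point (ε, 0, 0), for ε = 1 or ε = −1, is the diagonal linear map on ℝ³ with diagonal entries 2(1−w_m), 2 − ε λ_V √((D−2)/(D−1)), and 2 − ε λ_W √((D−2)/(D−1)); in particular its eigenvalues are exactly these three numbers. -/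
/-! `G₁` depends on `(y, z)` only through `y²` and `z²`, while `G₂` and `G₃` are `y` resp. `z`
times a polynomial, so the Jacobian at a point `(x, 0, 0)` is diagonal. At `x = ±1` its entries
simplify using `x² = 1`, and the eigenvalues of a diagonal map are its diagonal entries. -/

open Module End

theorem fderiv_G_apply_mk_zero_zero (D : ℕ) (wm lV lW f1 f2 x : ℝ) (v : ℝ × ℝ × ℝ) :
    fderiv ℝ (G D wm lV lW f1 f2) (x, 0, 0) v =
      ((1 - wm) * (3 * x ^ 2 - 1) * v.1,
       (1 + wm + (1 - wm) * x ^ 2 - x * lV * √(((D : ℝ) - 2) / ((D : ℝ) - 1))) * v.2.1,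
       (1 + wm + (1 - wm) * x ^ 2 - x * lW * √(((D : ℝ) - 2) / ((D : ℝ) - 1))) * v.2.2) := by
  unfold G
  simp (disch := fun_prop) only [DifferentiableAt.fderiv_prodMk, fderiv_fun_add, fderiv_fun_sub,
    fderiv_fun_mul, fderiv_fun_pow, fderiv.fst, fderiv.snd, fderiv_fun_id, fderiv_fun_const,
    ContinuousLinearMap.prod_apply, add_apply, sub_apply, smul_apply,
    ContinuousLinearMap.comp_apply, ContinuousLinearMap.coe_fst', ContinuousLinearMap.coe_snd',
    ContinuousLinearMap.id_apply, Pi.zero_apply, zero_apply, smul_eq_mul, nsmul_eq_mul,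
    Prod.mk.injEq]
  exact ⟨by ring, by ring, by ring⟩

theorem hasEigenvalue_iff_of_apply_eq_diag {K : Type*} [Field K] (L : End K (K × K × K))
    (a b c : K) (hL : ∀ v, L v = (a * v.1, b * v.2.1, c * v.2.2)) (μ : K) :
    L.HasEigenvalue μ ↔ μ = a ∨ μ = b ∨ μ = c := by
  constructor
  · intro hμ
    obtain ⟨v, hv⟩ := hμ.exists_hasEigenvector
    obtain ⟨h1, h2, h3⟩ : a * v.1 = μ * v.1 ∧ b * v.2.1 = μ * v.2.1 ∧ c * v.2.2 = μ * v.2.2 := by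
      simpa [hL, Prod.ext_iff] using hv.apply_eq_smul
    by_contra! ⟨ha, hb, hc⟩
    exact hv.2 (Prod.ext ((mul_eq_mul_right_iff.1 h1).resolve_left ha.symm)
      (Prod.ext ((mul_eq_mul_right_iff.1 h2).resolve_left hb.symm)
        ((mul_eq_mul_right_iff.1 h3).resolve_left hc.symm)))
  · have of_apply_eq_smul (x : K × K × K) (hx : x ≠ 0) (h : L x = μ • x) : L.HasEigenvalue μ :=
      hasEigenvalue_of_hasEigenvector ⟨mem_eigenspace_iff.2 h, hx⟩
    rintro (rfl | rfl | rfl)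
    · exact of_apply_eq_smul (1, 0, 0) (by simp) (by simp [hL])
    · exact of_apply_eq_smul (0, 1, 0) (by simp) (by simp [hL])
    · exact of_apply_eq_smul (0, 0, 1) (by simp) (by simp [hL])

theorem linearization_CP2_CP3_general (D : ℕ) (wm lV lW f1 f2 : ℝ)
    (ε : ℝ) (hε : ε = 1 ∨ ε = -1) :
    (∀ v : ℝ × ℝ × ℝ,
      fderiv ℝ (G D wm lV lW f1 f2) (ε, 0, 0) v =
        (2 * (1 - wm) * v.1,
         (2 - ε * lV * Real.sqrt (((D : ℝ) - 2) / ((D : ℝ) - 1))) * v.2.1,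
         (2 - ε * lW * Real.sqrt (((D : ℝ) - 2) / ((D : ℝ) - 1))) * v.2.2)) ∧
    ∀ μ : ℝ,
      Module.End.HasEigenvalue
        ((fderiv ℝ (G D wm lV lW f1 f2) (ε, 0, 0)).toLinearMap) μ ↔
      (μ = 2 * (1 - wm) ∨
       μ = 2 - ε * lV * Real.sqrt (((D : ℝ) - 2) / ((D : ℝ) - 1)) ∨
       μ = 2 - ε * lW * Real.sqrt (((D : ℝ) - 2) / ((D : ℝ) - 1))) := by
  have hε_sq : ε ^ 2 = 1 := by rcases hε with rfl | rfl <;> norm_num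
  have hdiag (v : ℝ × ℝ × ℝ) : fderiv ℝ (G D wm lV lW f1 f2) (ε, 0, 0) v =
      (2 * (1 - wm) * v.1,
       (2 - ε * lV * Real.sqrt (((D : ℝ) - 2) / ((D : ℝ) - 1))) * v.2.1,
       (2 - ε * lW * Real.sqrt (((D : ℝ) - 2) / ((D : ℝ) - 1))) * v.2.2) := by
    rw [fderiv_G_apply_mk_zero_zero, hε_sq]
    ring_nf
  exact ⟨hdiag, hasEigenvalue_iff_of_apply_eq_diag _ _ _ _ hdiag⟩

/-- the linearization of `G` at CP₂ `(1,0,0)` and CP₃ `(−1,0,0)` is the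
diagonal map with entries `2(1−w_m)`, `2 − ε λ_V √((D−2)/(D−1))`, `2 − ε λ_W √((D−2)/(D−1))`,
and its eigenvalues are exactly these three numbers. -/
theorem linearization_CP2_CP3 (D : ℕ) (hD : 4 ≤ D) (wm lV lW f1 f2 : ℝ)
    (ε : ℝ) (hε : ε = 1 ∨ ε = -1) :
    (∀ v : ℝ × ℝ × ℝ,
      fderiv ℝ (G D wm lV lW f1 f2) (ε, 0, 0) v =
        (2 * (1 - wm) * v.1,
         (2 - ε * lV * Real.sqrt (((D : ℝ) - 2) / ((D : ℝ) - 1))) * v.2.1,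
         (2 - ε * lW * Real.sqrt (((D : ℝ) - 2) / ((D : ℝ) - 1))) * v.2.2)) ∧
    ∀ μ : ℝ,
      Module.End.HasEigenvalue
        ((fderiv ℝ (G D wm lV lW f1 f2) (ε, 0, 0)).toLinearMap) μ ↔
      (μ = 2 * (1 - wm) ∨
       μ = 2 - ε * lV * Real.sqrt (((D : ℝ) - 2) / ((D : ℝ) - 1)) ∨
       μ = 2 - ε * lW * Real.sqrt (((D : ℝ) - 2) / ((D : ℝ) - 1))) :=
  linearization_CP2_CP3_general D wm lV lW f1 f2 ε hε
end

section
/- (Linearization at CP₇.) Assume λ_V = λ_W = 0, f₁ = f₂ > 0, and let c ∈ ℝ with f₁ c² ≤ 1. Then the characteristic polynomial of the Jacobian matrix of G at the point (0, √(1 − f₁ c²), c) equals X·(X + 2)·(X + 2(1+w_m)); in particular the eigenvalues of the Jacobian at this critical point are −2, −2(1+w_m), and 0. -/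
/-- The standard basis of `ℝ³ = ℝ × ℝ × ℝ`. -/
def stdBasis : Fin 3 → ℝ × ℝ × ℝ := ![(1, 0, 0), (0, 1, 0), (0, 0, 1)]

/-- The components of a vector in `ℝ³ = ℝ × ℝ × ℝ`. -/
def comp (p : ℝ × ℝ × ℝ) : Fin 3 → ℝ := ![p.1, p.2.1, p.2.2]

/-- The Jacobian matrix of `G` at a point `p`, i.e. the matrix of the total
derivative of `G` at `p` in the standard basis. -/
noncomputable def jacobian (D : ℕ) (wm lV lW f1 f2 : ℝ) (p : ℝ × ℝ × ℝ) :
    Matrix (Fin 3) (Fin 3) ℝ :=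
  Matrix.of fun i j => comp (fderiv ℝ (G D wm lV lW f1 f2) p (stdBasis j)) i

/-! With `λ_V = λ_W = 0` and `f₁ = f₂ = f`, the Jacobian at `(0, s, c)`, `s² + f c² = 1`, is block
diagonal: `∂G₁/∂x = −2`, and the `(y, z)` block is the rank-one matrix `−2(1 + w_m) (s, c)ᵀ (s, f c)`,
of trace `−2(1 + w_m)(s² + f c²) = −2(1 + w_m)`. Hence its eigenvalues are `0` and `−2(1 + w_m)`. -/

theorem fderiv_G_apply (D : ℕ) (wm lV lW f1 f2 x y z : ℝ) (v : ℝ × ℝ × ℝ) :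
    fderiv ℝ (G D wm lV lW f1 f2) (x, y, z) v =
      let k := Real.sqrt (((D : ℝ) - 2) / ((D : ℝ) - 1))
      let F := f2 + wm * f1
      ((3 * (1 - wm) * x ^ 2 - (1 + wm) * y ^ 2 - F * z ^ 2 - (1 - wm)) * v.1
          + (-2 * (1 + wm) * x * y + 4 * k * lV * y) * v.2.1
          + (-2 * F * x * z + 4 * k * lW * f1 * z) * v.2.2,
        (2 * (1 - wm) * x * y - k * lV * y) * v.1
          + ((1 + wm) + (1 - wm) * x ^ 2 - 3 * (1 + wm) * y ^ 2 - F * z ^ 2 - k * lV * x) * v.2.1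
          + (-2 * F * y * z) * v.2.2,
        (2 * (1 - wm) * x * z - k * lW * z) * v.1
          + (-2 * (1 + wm) * y * z) * v.2.1
          + ((1 + wm) + (1 - wm) * x ^ 2 - (1 + wm) * y ^ 2 - 3 * F * z ^ 2 - k * lW * x) * v.2.2) := by
  set p : ℝ × ℝ × ℝ := (x, y, z)
  set k := Real.sqrt (((D : ℝ) - 2) / ((D : ℝ) - 1))
  have hx : HasFDerivAt (fun q : ℝ × ℝ × ℝ => q.1) _ p := hasFDerivAt_fst (𝕜 := ℝ)
  have hy : HasFDerivAt (fun q : ℝ × ℝ × ℝ => q.2.1) _ p := (hasFDerivAt_snd (𝕜 := ℝ)).fst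
  have hz : HasFDerivAt (fun q : ℝ × ℝ × ℝ => q.2.2) _ p := (hasFDerivAt_snd (𝕜 := ℝ)).snd
  -- `h1`, `h2`, `h3` follow the expression trees of the components of `G`, so `hG` is by unfolding.
  have h1 := ((((hx.pow 3).const_mul (1 - wm)).sub ((hx.const_mul (1 + wm)).mul (hy.pow 2))).sub
      ((hx.const_mul (f2 + wm * f1)).mul (hz.pow 2))).sub (hx.const_mul (1 - wm)) |>.add
      ((((hy.pow 2).const_mul lV).add ((hz.pow 2).const_mul (lW * f1))).const_mul (2 * k))
  have h2 := ((((hy.const_mul (1 + wm)).add (((hx.pow 2).const_mul (1 - wm)).mul hy)).sub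
      ((hy.pow 3).const_mul (1 + wm))).sub ((hy.const_mul (f2 + wm * f1)).mul (hz.pow 2))).sub
      ((hx.const_mul (k * lV)).mul hy)
  have h3 := ((((hz.const_mul (1 + wm)).add (((hx.pow 2).const_mul (1 - wm)).mul hz)).sub
      (((hy.pow 2).const_mul (1 + wm)).mul hz)).sub ((hz.pow 3).const_mul (f2 + wm * f1))).sub
      ((hx.const_mul (k * lW)).mul hz)
  have hG : HasFDerivAt (G D wm lV lW f1 f2) _ p := h1.prodMk (h2.prodMk h3)
  rw [hG.fderiv]
  obtain ⟨v1, v2, v3⟩ := v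
  simp only [p, ContinuousLinearMap.prod_apply, add_apply,
    sub_apply, smul_apply, ContinuousLinearMap.comp_apply,
    ContinuousLinearMap.coe_fst', ContinuousLinearMap.coe_snd', smul_eq_mul, nsmul_eq_mul,
    Nat.cast_ofNat, Nat.add_one_sub_one, pow_one, Prod.mk.injEq]
  refine ⟨by ring, by ring, by ring⟩

theorem jacobian_CP7 (D : ℕ) (wm f s c : ℝ) (hs : s ^ 2 + f * c ^ 2 = 1) :
    jacobian D wm 0 0 f f (0, s, c) =
      !![-2, 0, 0;
         0, -2 * (1 + wm) * s ^ 2, -2 * (1 + wm) * f * s * c;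
         0, -2 * (1 + wm) * s * c, -2 * (1 + wm) * f * c ^ 2] := by
  ext i j
  fin_cases i <;> fin_cases j <;>
    simp only [jacobian, _root_.comp, stdBasis, fderiv_G_apply, Matrix.of_apply, Matrix.cons_val',
      Matrix.cons_val_zero, Matrix.cons_val_one, Matrix.cons_val, Matrix.cons_val_fin_one,
      Fin.reduceFinMk, Fin.isValue, Fin.zero_eta, Fin.mk_one] <;>
    first | ring1 | linear_combination (-(1 + wm)) * hs

section

open Polynomial

theorem Matrix.charpoly_fin_three_block {R : Type*} [CommRing R] (a p q r t : R) :
    (!![a, 0, 0; 0, p, q; 0, r, t]).charpoly =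
      (X - C a) * (X ^ 2 - C (p + t) * X + C (p * t - q * r)) := by
  rw [charpoly, det_fin_three]
  simp only [Fin.isValue, charmatrix_apply_eq, charmatrix_apply_ne, of_apply, cons_val',
    cons_val_zero, cons_val_fin_one, cons_val_one, cons_val, ne_eq, Fin.reduceEq, not_false_eq_true,
    mul_neg, neg_mul, neg_neg, map_zero, neg_zero, mul_zero, zero_mul, sub_zero, add_zero, map_add,
    map_sub, map_mul]
  ring

theorem Polynomial.isRoot_X_mul_X_add_C_mul_X_add_C {R : Type*} [CommRing R] [IsDomain R] (a b μ : R) :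
    (X * (X + C a) * (X + C b)).IsRoot μ ↔ μ = -a ∨ μ = -b ∨ μ = 0 := by
  simp only [IsRoot, eval_mul, eval_add, eval_X, eval_C, mul_eq_zero, add_eq_zero_iff_eq_neg]
  tauto

end

open Polynomial in
theorem charpoly_jacobian_CP7_general (D : ℕ) (wm lV lW f1 f2 : ℝ)
    (hlV : lV = 0) (hlW : lW = 0) (hf : f1 = f2)
    (c : ℝ) (hc : f1 * c ^ 2 ≤ 1) :
    (jacobian D wm lV lW f1 f2 (0, Real.sqrt (1 - f1 * c ^ 2), c)).charpoly =
        X * (X + C 2) * (X + C (2 * (1 + wm))) ∧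
      ∀ μ : ℝ,
        (jacobian D wm lV lW f1 f2 (0, Real.sqrt (1 - f1 * c ^ 2), c)).charpoly.IsRoot μ ↔
        (μ = -2 ∨ μ = -(2 * (1 + wm)) ∨ μ = 0) := by
  subst hlV hlW hf
  set s := Real.sqrt (1 - f1 * c ^ 2)
  have hs : s ^ 2 + f1 * c ^ 2 = 1 := by
    rw [Real.sq_sqrt (by linarith)]
    ring
  have hC : C s ^ 2 + C f1 * C c ^ 2 = (1 : ℝ[X]) := by
    simpa using congrArg C hs
  have hcp : (jacobian D wm 0 0 f1 f1 (0, s, c)).charpoly =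
      X * (X + C 2) * (X + C (2 * (1 + wm))) := by
    rw [jacobian_CP7 D wm f1 s c hs, Matrix.charpoly_fin_three_block]
    simp only [map_neg, map_add, map_sub, map_mul, map_pow, map_ofNat, map_one]
    linear_combination 2 * (1 + C wm) * X * (X + 2) * hC
  exact ⟨hcp, fun μ => hcp ▸ Polynomial.isRoot_X_mul_X_add_C_mul_X_add_C 2 _ μ⟩

open Polynomial in
/-- at the CP₇ point `(0, √(1 − f₁c²), c)` (with `λ_V = λ_W = 0` and
`f₁ = f₂ > 0`), the characteristic polynomial of the Jacobian of `G` is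
`X (X + 2) (X + 2(1 + w_m))`; in particular the eigenvalues are `−2`, `−2(1+w_m)`, `0`. -/
theorem charpoly_jacobian_CP7 (D : ℕ) (hD : 4 ≤ D) (wm lV lW f1 f2 : ℝ)
    (hlV : lV = 0) (hlW : lW = 0) (hf : f1 = f2) (hf1 : 0 < f1)
    (c : ℝ) (hc : f1 * c ^ 2 ≤ 1) :
    (jacobian D wm lV lW f1 f2 (0, Real.sqrt (1 - f1 * c ^ 2), c)).charpoly =
        X * (X + C 2) * (X + C (2 * (1 + wm))) ∧
      ∀ μ : ℝ,
        (jacobian D wm lV lW f1 f2 (0, Real.sqrt (1 - f1 * c ^ 2), c)).charpoly.IsRoot μ ↔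
        (μ = -2 ∨ μ = -(2 * (1 + wm)) ∨ μ = 0) :=
  charpoly_jacobian_CP7_general D wm lV lW f1 f2 hlV hlW hf c hc
end

section
/- (Eigenvalue μ₁ at CP₅.) Assume λ_V > 0 and let A be a real number with 0 ≤ A ≤ 2 satisfying (D−1)(3−w_m)A² − 2[(D−1)(1+w_m) + (D−2)λ_V²]A + 2(D−2)(1+w_m)λ_V² = 0. Let p = (x_c, y_c, 0) with x_c = (A/λ_V)·√((D−1)/(D−2)) and y_c = (1/λ_V)·√((D−1)(2−A)A/(2(D−2))). Then the standard basis vector e₃ = (0,0,1) is an eigenvector of the total derivative of G at p with eigenvalue (1 − λ_W/λ_V)·A; that is, DG(p)(e₃) = (1 − λ_W/λ_V)·A · e₃. -/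
/-! `G₁` and `G₂` are even in `z` and `G₃` is odd in `z`, so on the plane `z = 0` the `z`-derivative
of `G` is `(0, 0, (1 + w_m) + (1 − w_m) x² − (1 + w_m) y² − k λ_W x)`. At CP₅ one has `k x = A / λ_V`,
and the quadratic for `A` is, after clearing denominators, the relation `(1 + w_m) + (1 − w_m) x² − (1 + w_m) y² = A`. -/

section
variable (D : ℕ) (wm lV lW f1 f2 : ℝ)

theorem hasDerivAt_G_along_z (x y : ℝ) :
    HasDerivAt (fun t : ℝ => G D wm lV lW f1 f2 (x, y, t))
      (0, 0, (1 + wm) + (1 - wm) * x ^ 2 - (1 + wm) * y ^ 2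
        - √(((D : ℝ) - 2) / ((D : ℝ) - 1)) * lW * x) 0 := by
  unfold G
  refine HasDerivAt.prodMk ?_ (HasDerivAt.prodMk ?_ ?_)
  all_goals
    refine (hasDerivAt_deriv_iff.mpr (by fun_prop)).congr_deriv ?_
    simp (disch := fun_prop)

theorem fderiv_G_apply_e3 (x y : ℝ) :
    fderiv ℝ (G D wm lV lW f1 f2) (x, y, 0) (0, 0, 1) =
      (0, 0, (1 + wm) + (1 - wm) * x ^ 2 - (1 + wm) * y ^ 2
        - √(((D : ℝ) - 2) / ((D : ℝ) - 1)) * lW * x) := by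
  have hline : HasDerivAt (fun t : ℝ => ((x, y, t) : ℝ × ℝ × ℝ)) (0, 0, 1) 0 :=
    (hasDerivAt_const 0 x).prodMk ((hasDerivAt_const 0 y).prodMk (hasDerivAt_id 0))
  have hG : DifferentiableAt ℝ (G D wm lV lW f1 f2) (x, y, 0) := by
    unfold G
    fun_prop
  have hcomp : HasDerivAt (fun t : ℝ => G D wm lV lW f1 f2 (x, y, t))
      (fderiv ℝ (G D wm lV lW f1 f2) (x, y, 0) (0, 0, 1)) 0 :=
    HasFDerivAt.comp_hasDerivAt (l := G D wm lV lW f1 f2) 0 hG.hasFDerivAt hline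
  exact hcomp.unique (hasDerivAt_G_along_z D wm lV lW f1 f2 x y)

end

theorem dG3_dz_eq_at_CP5 {D wm lV lW A : ℝ} (hD : 2 < D) (hlV : lV ≠ 0)
    (hA0 : 0 ≤ A) (hA2 : A ≤ 2)
    (hquad : (D - 1) * (3 - wm) * A ^ 2 - 2 * ((D - 1) * (1 + wm) + (D - 2) * lV ^ 2) * A
        + 2 * (D - 2) * (1 + wm) * lV ^ 2 = 0) :
    let x := (A / lV) * √((D - 1) / (D - 2))
    let y := (1 / lV) * √((D - 1) * (2 - A) * A / (2 * (D - 2)))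
    (1 + wm) + (1 - wm) * x ^ 2 - (1 + wm) * y ^ 2 - √((D - 2) / (D - 1)) * lW * x
      = (1 - lW / lV) * A := by
  intro x y
  have hD1 : 0 < D - 1 := by linarith
  have hD2 : 0 < D - 2 := by linarith
  have hkx : √((D - 2) / (D - 1)) * lW * x = lW * (A / lV) := by
    have hk : √((D - 2) / (D - 1)) * √((D - 1) / (D - 2)) = 1 := by
      rw [← inv_div, Real.sqrt_inv, inv_mul_cancel₀ (Real.sqrt_ne_zero'.mpr (by positivity))]
    linear_combination lW * (A / lV) * hk
  have hx2 : x ^ 2 = (A / lV) ^ 2 * ((D - 1) / (D - 2)) := by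
    rw [mul_pow, Real.sq_sqrt (by positivity)]
  have hy2 : y ^ 2 = (1 / lV) ^ 2 * ((D - 1) * (2 - A) * A / (2 * (D - 2))) := by
    have h2A : 0 ≤ 2 - A := by linarith
    rw [mul_pow, Real.sq_sqrt (by positivity)]
  rw [hx2, hy2, hkx]
  field_simp
  linear_combination hquad

/-- at CP₅, the vector `e₃ = (0,0,1)` is an eigenvector of the total
derivative of `G` with eigenvalue `(1 − λ_W/λ_V) A`. -/
theorem eigenvalue_mu1_CP5 (D : ℕ) (hD : 4 ≤ D) (wm lV lW f1 f2 : ℝ)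
    (hlV : 0 < lV) (A : ℝ) (hA0 : 0 ≤ A) (hA2 : A ≤ 2)
    (hquad : ((D : ℝ) - 1) * (3 - wm) * A ^ 2
        - 2 * (((D : ℝ) - 1) * (1 + wm) + ((D : ℝ) - 2) * lV ^ 2) * A
        + 2 * ((D : ℝ) - 2) * (1 + wm) * lV ^ 2 = 0) :
    fderiv ℝ (G D wm lV lW f1 f2)
        ((A / lV) * Real.sqrt (((D : ℝ) - 1) / ((D : ℝ) - 2)),
         (1 / lV) * Real.sqrt (((D : ℝ) - 1) * (2 - A) * A / (2 * ((D : ℝ) - 2))),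
         0) (0, 0, 1) =
      ((1 - lW / lV) * A) • ((0, 0, 1) : ℝ × ℝ × ℝ) := by
  have hD2 : (2 : ℝ) < D := by exact_mod_cast (by omega : 2 < D)
  rw [fderiv_G_apply_e3, dG3_dz_eq_at_CP5 hD2 hlV.ne' hA0 hA2 hquad]
  simp
end

section
/- (Eigenvalue μ₁ at CP₈.) Assume λ_W > 0, f₁ = f₂ > 0, and let B be a real number with 0 ≤ B ≤ 2 satisfying (D−1)(3−w_m)B² − 2[(D−1)(1+w_m) + (D−2)λ_W²]B + 2(D−2)(1+w_m)λ_W² = 0. Let p = (x_c, 0, z_c) with x_c = (B/λ_W)·√((D−1)/(D−2)) and z_c = (1/λ_W)·√((D−1)(2−B)B/(2(D−2)f₁)). Then the standard basis vector e₂ = (0,1,0) is an eigenvector of the total derivative of G at p with eigenvalue (1 − λ_V/λ_W)·B; that is, DG(p)(e₂) = (1 − λ_V/λ_W)·B · e₂. -/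
noncomputable def mu1 (D : ℕ) (wm lV f1 f2 x z : ℝ) : ℝ :=
  (1 + wm) + (1 - wm) * x ^ 2 - (f2 + wm * f1) * z ^ 2
    - Real.sqrt (((D : ℝ) - 2) / ((D : ℝ) - 1)) * lV * x

lemma hasDerivAt_add_mul_sq_zero (a b : ℝ) : HasDerivAt (fun t : ℝ => a + b * t ^ 2) 0 0 := by
  simpa using ((hasDerivAt_pow 2 (0 : ℝ)).const_mul b).const_add a

lemma hasDerivAt_mul_sub_mul_cube_zero (a b : ℝ) :
    HasDerivAt (fun t : ℝ => a * t - b * t ^ 3) a 0 := by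
  simpa using
    ((hasDerivAt_id (0 : ℝ)).const_mul a).fun_sub ((hasDerivAt_pow 3 (0 : ℝ)).const_mul b)

lemma fderiv_G_apply_e₂ (D : ℕ) (wm lV lW f1 f2 x z : ℝ) :
    fderiv ℝ (G D wm lV lW f1 f2) (x, 0, z) (0, 1, 0) = (0, mu1 D wm lV f1 f2 x z, 0) := by
  set k := Real.sqrt (((D : ℝ) - 2) / ((D : ℝ) - 1))
  have hG : DifferentiableAt ℝ (G D wm lV lW f1 f2) (x, 0, z) := by
    unfold G; fun_prop
  have hline : HasLineDerivAt ℝ (G D wm lV lW f1 f2) (0, mu1 D wm lV f1 f2 x z, 0)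
      (x, 0, z) (0, 1, 0) := by
    have hcurve : (fun t : ℝ => G D wm lV lW f1 f2 ((x, 0, z) + t • (0, 1, 0))) = fun t =>
        (((1 - wm) * x ^ 3 - (f2 + wm * f1) * x * z ^ 2 - (1 - wm) * x + 2 * k * (lW * f1 * z ^ 2))
            + (2 * k * lV - (1 + wm) * x) * t ^ 2,
         mu1 D wm lV f1 f2 x z * t - (1 + wm) * t ^ 3,
         ((1 + wm) * z + (1 - wm) * x ^ 2 * z - (f2 + wm * f1) * z ^ 3 - k * lW * x * z)
            + (-((1 + wm) * z)) * t ^ 2) := by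
      funext t
      simp only [G, mu1, Prod.mk_add_mk, Prod.smul_mk, smul_eq_mul, Prod.mk.injEq]
      refine ⟨by ring, by ring, by ring⟩
    rw [HasLineDerivAt, hcurve]
    exact (hasDerivAt_add_mul_sq_zero _ _).prodMk
      ((hasDerivAt_mul_sub_mul_cube_zero _ _).prodMk (hasDerivAt_add_mul_sq_zero _ _))
  rw [← hG.lineDeriv_eq_fderiv, hline.lineDeriv]

lemma sqrt_div_mul_sqrt_div_swap {a b : ℝ} (h : 0 < a / b) : √(a / b) * √(b / a) = 1 := by
  rw [← inv_div a b, Real.sqrt_inv, mul_inv_cancel₀ (Real.sqrt_pos.2 h).ne']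

lemma mu1_CP8 (D : ℕ) (hD : (2 : ℝ) < D) (wm lV lW f1 : ℝ) (hlW : lW ≠ 0) (hf1 : 0 < f1)
    (B : ℝ) (hB0 : 0 ≤ B) (hB2 : B ≤ 2)
    (hquad : ((D : ℝ) - 1) * (3 - wm) * B ^ 2
        - 2 * (((D : ℝ) - 1) * (1 + wm) + ((D : ℝ) - 2) * lW ^ 2) * B
        + 2 * ((D : ℝ) - 2) * (1 + wm) * lW ^ 2 = 0) :
    mu1 D wm lV f1 f1 ((B / lW) * Real.sqrt (((D : ℝ) - 1) / ((D : ℝ) - 2)))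
        ((1 / lW) * Real.sqrt (((D : ℝ) - 1) * (2 - B) * B / (2 * ((D : ℝ) - 2) * f1))) =
      (1 - lV / lW) * B := by
  have hD1 : (0 : ℝ) < D - 1 := by linarith
  have hD2 : (0 : ℝ) < D - 2 := by linarith
  have hk : √(((D : ℝ) - 2) / (D - 1)) * √(((D : ℝ) - 1) / (D - 2)) = 1 :=
    sqrt_div_mul_sqrt_div_swap (by positivity)
  have hx : √(((D : ℝ) - 1) / (D - 2)) ^ 2 = (D - 1) / (D - 2) := Real.sq_sqrt (by positivity)
  have hz : √(((D : ℝ) - 1) * (2 - B) * B / (2 * (D - 2) * f1)) ^ 2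
      = (D - 1) * (2 - B) * B / (2 * (D - 2) * f1) :=
    Real.sq_sqrt (div_nonneg (mul_nonneg (mul_nonneg hD1.le (by linarith)) hB0) (by positivity))
  have hkx : √(((D : ℝ) - 2) / (D - 1)) * lV * (B / lW * √(((D : ℝ) - 1) / (D - 2)))
      = lV * B / lW := by
    linear_combination (lV * B / lW) * hk
  rw [mu1, hkx, mul_pow, mul_pow, hx, hz]
  field_simp
  linear_combination hquad

/-- at CP₈, the vector `e₂ = (0,1,0)` is an eigenvector of the total
derivative of `G` with eigenvalue `(1 − λ_V/λ_W) B`. -/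
theorem eigenvalue_mu1_CP8 (D : ℕ) (hD : 4 ≤ D) (wm lV lW f1 f2 : ℝ)
    (hlW : 0 < lW) (hf : f1 = f2) (hf1 : 0 < f1)
    (B : ℝ) (hB0 : 0 ≤ B) (hB2 : B ≤ 2)
    (hquad : ((D : ℝ) - 1) * (3 - wm) * B ^ 2
        - 2 * (((D : ℝ) - 1) * (1 + wm) + ((D : ℝ) - 2) * lW ^ 2) * B
        + 2 * ((D : ℝ) - 2) * (1 + wm) * lW ^ 2 = 0) :
    fderiv ℝ (G D wm lV lW f1 f2)
        ((B / lW) * Real.sqrt (((D : ℝ) - 1) / ((D : ℝ) - 2)),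
         0,
         (1 / lW) * Real.sqrt (((D : ℝ) - 1) * (2 - B) * B / (2 * ((D : ℝ) - 2) * f1)))
        (0, 1, 0) =
      ((1 - lV / lW) * B) • ((0, 1, 0) : ℝ × ℝ × ℝ) := by
  subst hf
  rw [fderiv_G_apply_e₂, mu1_CP8 D (by exact_mod_cast (by omega : 2 < D)) wm lV lW f1 hlW.ne' hf1
    B hB0 hB2 hquad]
  simp
end

section
/- (Cosmological parameters at CP₅.) Assume λ_V > 0 and let A be a real number with 0 < A ≤ 2 satisfying (D−1)(3−w_m)A² − 2[(D−1)(1+w_m) + (D−2)λ_V²]A + 2(D−2)(1+w_m)λ_V² = 0. Let x_c = (A/λ_V)·√((D−1)/(D−2)) and y_c = (1/λ_V)·√((D−1)(2−A)A/(2(D−2))). Then at the point (x_c, y_c, 0): the density parameter satisfies Ω_MG = x_c² + y_c² = (D−1)(2+A)A/(2(D−2)λ_V²); the equation-of-state parameter satisfies w_MG = (x_c² − y_c²)/(x_c² + y_c²) = (3A−2)/(A+2); and the deceleration parameter satisfies q = −1 + ((D−1)/2)[(1+w_m) + (1−w_m)x_c² − (1+w_m)y_c²] = (D−1)A/2 −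 1. -/
/-!
With `k = (D-1)/((D-2) λ_V²)` the critical point has `x_c² = k A²` and `y_c² = k (2-A) A / 2`,
so `x_c² ± y_c²` are `k A / 2` times `A + 2` and `3A - 2`. Dividing the defining quadratic of `A`
by `2 (D-2) λ_V²` turns it into `k A ((3-w_m) A / 2 - (1+w_m)) = A - (1+w_m)`, which says exactly
that the bracket in `q` equals `A`.
-/

namespace CP5

variable {d lV A k x y : ℝ}

theorem x_sq_eq (hd : 2 < d) :
    (A / lV * √((d - 1) / (d - 2))) ^ 2 = (d - 1) / ((d - 2) * lV ^ 2) * A ^ 2 := by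
  rw [mul_pow, div_pow, Real.sq_sqrt (div_nonneg (by linarith) (by linarith)), mul_comm (d - 2),
    ← div_div]
  ring

theorem y_sq_eq (hd : 2 < d) (hA0 : 0 ≤ A) (hA2 : A ≤ 2) :
    (1 / lV * √((d - 1) * (2 - A) * A / (2 * (d - 2)))) ^ 2
      = (d - 1) / ((d - 2) * lV ^ 2) * ((2 - A) * A / 2) := by
  have hd1 : 0 ≤ d - 1 := by linarith
  have h2A : 0 ≤ 2 - A := by linarith
  rw [mul_pow, div_pow, Real.sq_sqrt (div_nonneg (by positivity) (by linarith))]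
  field_simp

theorem sq_add_sq_eq (hx : x ^ 2 = k * A ^ 2) (hy : y ^ 2 = k * ((2 - A) * A / 2)) :
    x ^ 2 + y ^ 2 = k * A / 2 * (A + 2) := by
  rw [hx, hy]; ring

theorem sq_sub_sq_div_sq_add_sq (hk : k ≠ 0) (hA : 0 < A)
    (hx : x ^ 2 = k * A ^ 2) (hy : y ^ 2 = k * ((2 - A) * A / 2)) :
    (x ^ 2 - y ^ 2) / (x ^ 2 + y ^ 2) = (3 * A - 2) / (A + 2) := by
  have hsub : x ^ 2 - y ^ 2 = k * A / 2 * (3 * A - 2) := by rw [hx, hy]; ring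
  rw [hsub, sq_add_sq_eq hx hy, mul_div_mul_left _ _ (by positivity)]

theorem deceleration_bracket_eq {wm : ℝ} (hd : 2 < d) (hlV : lV ≠ 0)
    (hquad : (d - 1) * (3 - wm) * A ^ 2 - 2 * ((d - 1) * (1 + wm) + (d - 2) * lV ^ 2) * A
        + 2 * (d - 2) * (1 + wm) * lV ^ 2 = 0)
    (hx : x ^ 2 = (d - 1) / ((d - 2) * lV ^ 2) * A ^ 2)
    (hy : y ^ 2 = (d - 1) / ((d - 2) * lV ^ 2) * ((2 - A) * A / 2)) :
    (1 + wm) + (1 - wm) * x ^ 2 - (1 + wm) * y ^ 2 = A := by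
  have hd2 : d - 2 ≠ 0 := by linarith
  rw [hx, hy]
  field_simp
  linear_combination hquad

end CP5

/-- the cosmological parameters at CP₅: the density parameter
`Ω_MG = x_c² + y_c²`, the equation-of-state parameter `w_MG = (x_c² − y_c²)/(x_c² + y_c²)`,
and the deceleration parameter
`q = −1 + ((D−1)/2)[(1+w_m) + (1−w_m)x_c² − (1+w_m)y_c²]`. -/
theorem cosmological_parameters_CP5 (D : ℕ) (hD : 4 ≤ D) (wm lV : ℝ)
    (hlV : 0 < lV) (A : ℝ) (hA0 : 0 < A) (hA2 : A ≤ 2)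
    (hquad : ((D : ℝ) - 1) * (3 - wm) * A ^ 2
        - 2 * (((D : ℝ) - 1) * (1 + wm) + ((D : ℝ) - 2) * lV ^ 2) * A
        + 2 * ((D : ℝ) - 2) * (1 + wm) * lV ^ 2 = 0)
    (xc yc : ℝ)
    (hx : xc = (A / lV) * Real.sqrt (((D : ℝ) - 1) / ((D : ℝ) - 2)))
    (hy : yc = (1 / lV) * Real.sqrt (((D : ℝ) - 1) * (2 - A) * A / (2 * ((D : ℝ) - 2)))) :
    xc ^ 2 + yc ^ 2 = ((D : ℝ) - 1) * (2 + A) * A / (2 * ((D : ℝ) - 2) * lV ^ 2) ∧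
    (xc ^ 2 - yc ^ 2) / (xc ^ 2 + yc ^ 2) = (3 * A - 2) / (A + 2) ∧
    -1 + (((D : ℝ) - 1) / 2) *
        ((1 + wm) + (1 - wm) * xc ^ 2 - (1 + wm) * yc ^ 2) =
      ((D : ℝ) - 1) * A / 2 - 1 := by
  have hd : (2 : ℝ) < D := by
    have : (4 : ℝ) ≤ D := by exact_mod_cast hD
    linarith
  have hk : ((D : ℝ) - 1) / (((D : ℝ) - 2) * lV ^ 2) ≠ 0 :=
    div_ne_zero (by linarith) (mul_ne_zero (by linarith) (by positivity))
  have hx2 := hx ▸ CP5.x_sq_eq (A := A) (lV := lV) hd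
  have hy2 := hy ▸ CP5.y_sq_eq (lV := lV) hd hA0.le hA2
  refine ⟨?_, CP5.sq_sub_sq_div_sq_add_sq hk hA0 hx2 hy2, ?_⟩
  · rw [CP5.sq_add_sq_eq hx2 hy2]
    field_simp
    ring
  · rw [CP5.deceleration_bracket_eq hd hlV.ne' hquad hx2 hy2]
    ring
end

section
/- (Cosmological parameters at CP₈.) Assume λ_W > 0, f₁ = f₂ > 0, and let B be a real number with 0 < B ≤ 2 satisfying (D−1)(3−w_m)B² − 2[(D−1)(1+w_m) + (D−2)λ_W²]B + 2(D−2)(1+w_m)λ_W² = 0. Let x_c = (B/λ_W)·√((D−1)/(D−2)) and z_c = (1/λ_W)·√((D−1)(2−B)B/(2(D−2)f₁)). Then at the point (x_c, 0, z_c): the density parameter satisfies Ω_MG = x_c² + f₁ z_c² = (D−1)(2+B)B/(2(D−2)λ_W²); the equation-of-state parameter satisfies w_MG = (x_c² − f₂ z_c²)/(x_c² + f₁ z_c²) = (3B−2)/(B+2); and the deceleration parameter satisfies q = −1 + ((D−1)/2)[(1+w_m) + (1−w_m)x_c² − (f₂ + w_m f₁)z_c²] = (D−1)B/2 − 1. 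-/
/-! At CP₈ both `x_c²` and `f₁ z_c²` are multiples of `K = (D−1)/((D−2)λ_W²)`, namely `K B²` and
`K (2−B) B / 2`. The density and equation-of-state parameters are then rational expressions in `B`
alone, while the bracket of the deceleration parameter equals `B` exactly because `B` solves the
quadratic (divided by `2 (D−2) λ_W²`). -/

namespace CP8

section Squares

variable {n lW B : ℝ}

theorem sq_xc (hn : 2 < n) :
    ((B / lW) * √((n - 1) / (n - 2))) ^ 2 = (n - 1) / ((n - 2) * lW ^ 2) * B ^ 2 := by
  rw [mul_pow, Real.sq_sqrt (div_nonneg (by linarith) (by linarith)), div_pow]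
  field_simp

theorem mul_sq_zc {f1 : ℝ} (hn : 2 < n) (hf1 : 0 < f1) (hB0 : 0 ≤ B) (hB2 : B ≤ 2) :
    f1 * ((1 / lW) * √((n - 1) * (2 - B) * B / (2 * (n - 2) * f1))) ^ 2 =
      (n - 1) / ((n - 2) * lW ^ 2) * (2 - B) * B / 2 := by
  have hnonneg : 0 ≤ (n - 1) * (2 - B) * B / (2 * (n - 2) * f1) := by
    have : 0 < 2 * (n - 2) * f1 := by nlinarith
    exact div_nonneg (mul_nonneg (mul_nonneg (by linarith) (by linarith)) hB0) this.le
  rw [mul_pow, Real.sq_sqrt hnonneg]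
  field_simp

end Squares

section Parameters

variable {K B X Z : ℝ} (hX : X = K * B ^ 2) (hZ : Z = K * (2 - B) * B / 2)
include hX hZ

theorem density_eq : X + Z = K * (2 + B) * B / 2 := by
  rw [hX, hZ]
  ring

theorem eos_eq (hK : K ≠ 0) (hB : 0 < B) :
    (X - Z) / (X + Z) = (3 * B - 2) / (B + 2) := by
  have hB2 : B + 2 ≠ 0 := by linarith
  rw [density_eq hX hZ, hX, hZ]
  field_simp
  ring

theorem deceleration_bracket_eq {wm : ℝ}
    (hquad : K * (3 - wm) * B ^ 2 - 2 * K * (1 + wm) * B - 2 * B + 2 * (1 + wm) = 0) :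
    (1 + wm) + (1 - wm) * X - (1 + wm) * Z = B := by
  rw [hX, hZ]
  linear_combination hquad / 2

end Parameters

end CP8

open CP8 in
/-- the cosmological parameters at CP₈: the density parameter
`Ω_MG = x_c² + f₁ z_c²`, the equation-of-state parameter
`w_MG = (x_c² − f₂ z_c²)/(x_c² + f₁ z_c²)`, and the deceleration parameter
`q = −1 + ((D−1)/2)[(1+w_m) + (1−w_m)x_c² − (f₂ + w_m f₁)z_c²]`. -/
theorem cosmological_parameters_CP8 (D : ℕ) (hD : 4 ≤ D) (wm lW f1 f2 : ℝ)
    (hlW : 0 < lW) (hf : f1 = f2) (hf1 : 0 < f1)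
    (B : ℝ) (hB0 : 0 < B) (hB2 : B ≤ 2)
    (hquad : ((D : ℝ) - 1) * (3 - wm) * B ^ 2
        - 2 * (((D : ℝ) - 1) * (1 + wm) + ((D : ℝ) - 2) * lW ^ 2) * B
        + 2 * ((D : ℝ) - 2) * (1 + wm) * lW ^ 2 = 0)
    (xc zc : ℝ)
    (hx : xc = (B / lW) * Real.sqrt (((D : ℝ) - 1) / ((D : ℝ) - 2)))
    (hz : zc = (1 / lW) *
      Real.sqrt (((D : ℝ) - 1) * (2 - B) * B / (2 * ((D : ℝ) - 2) * f1))) :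
    xc ^ 2 + f1 * zc ^ 2 = ((D : ℝ) - 1) * (2 + B) * B / (2 * ((D : ℝ) - 2) * lW ^ 2) ∧
    (xc ^ 2 - f2 * zc ^ 2) / (xc ^ 2 + f1 * zc ^ 2) = (3 * B - 2) / (B + 2) ∧
    -1 + (((D : ℝ) - 1) / 2) *
        ((1 + wm) + (1 - wm) * xc ^ 2 - (f2 + wm * f1) * zc ^ 2) =
      ((D : ℝ) - 1) * B / 2 - 1 := by
  have hn : (2 : ℝ) < D := by exact_mod_cast (show 2 < D by omega)
  have hD2 : (0 : ℝ) < D - 2 := sub_pos.2 hn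
  set K := ((D : ℝ) - 1) / ((D - 2) * lW ^ 2)
  have hK : 0 < K := div_pos (by linarith) (by positivity)
  have hX : xc ^ 2 = K * B ^ 2 := hx ▸ sq_xc hn
  have hZ : f1 * zc ^ 2 = K * (2 - B) * B / 2 := hz ▸ mul_sq_zc hn hf1 hB0.le hB2
  subst hf
  refine ⟨?_, eos_eq hX hZ hK.ne' hB0, ?_⟩
  · rw [density_eq hX hZ]
    simp only [K]
    field_simp
  · have hquadK : K * (3 - wm) * B ^ 2 - 2 * K * (1 + wm) * B - 2 * B + 2 * (1 + wm) = 0 := by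
      simp only [K]
      field_simp [hD2.ne', hlW.ne']
      linear_combination hquad
    rw [show (f1 + wm * f1) * zc ^ 2 = (1 + wm) * (f1 * zc ^ 2) by ring,
      deceleration_bracket_eq hX hZ hquadK]
    ring
end

section
/- (Cosmological parameters at CP₆.) Assume 0 ≤ λ_V < λ_W and f₁ = f₂ < 0, and let y_c = √(λ_W/(λ_W − λ_V)) and z_c = √(λ_V/(|f₁|(λ_W − λ_V))). Then at the point (0, y_c, z_c): the density parameter satisfies Ω_MG = y_c² + f₁ z_c² = 1; the equation-of-state parameter satisfies w_MG = (−y_c² − f₂ z_c²)/(y_c² + f₁ z_c²) = −1; and the deceleration parameter satisfies q = −1 + ((D−1)/2)[(1+w_m) − (1+w_m)y_c² − (f₂ + w_m f₁)z_c²] = −1. -/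
/-! At CP₆ the two potential terms balance exactly: `y_c² = λ_W/(λ_W − λ_V)` and
`f₁ z_c² = −λ_V/(λ_W − λ_V)`, so `Ω_MG = 1`. On the plane `x = 0` with `f₁ = f₂` the
numerator of `w_MG` is `−Ω_MG`, and the bracket in `q` is `(1 + w_m)(1 − Ω_MG)`; hence
`w_MG = −1` and `q = −1`. -/

open Real

lemma sqrt_sq_add_mul_sqrt_sq_eq_one {lV lW f : ℝ} (hlV : 0 ≤ lV) (hlt : lV < lW) (hf : f < 0) :
    √(lW / (lW - lV)) ^ 2 + f * √(lV / (|f| * (lW - lV))) ^ 2 = 1 := by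
  have hsub : 0 < lW - lV := sub_pos.2 hlt
  have hlW : 0 ≤ lW := hlV.trans hlt.le
  have hnf : 0 < -f := neg_pos.2 hf
  have hf0 : f ≠ 0 := hf.ne
  rw [abs_of_neg hf, sq_sqrt (by positivity), sq_sqrt (by positivity)]
  field_simp
  ring

lemma neg_sq_sub_mul_sq_div_eq_neg_one {y z f : ℝ} (h : y ^ 2 + f * z ^ 2 ≠ 0) :
    (-y ^ 2 - f * z ^ 2) / (y ^ 2 + f * z ^ 2) = -1 := by
  rw [← neg_add', neg_div, div_self h]

lemma decel_eq_neg_one_of_density_eq_one {c w y z f : ℝ} (h : y ^ 2 + f * z ^ 2 = 1) :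
    -1 + c * ((1 + w) - (1 + w) * y ^ 2 - (f + w * f) * z ^ 2) = -1 := by
  linear_combination (-(c * (1 + w))) * h

theorem cosmological_parameters_CP6_general (D : ℕ) (wm lV lW f1 f2 : ℝ)
    (hlV : 0 ≤ lV) (hlt : lV < lW) (hf : f1 = f2) (hf1 : f1 < 0)
    (yc zc : ℝ)
    (hy : yc = Real.sqrt (lW / (lW - lV)))
    (hz : zc = Real.sqrt (lV / (|f1| * (lW - lV)))) :
    yc ^ 2 + f1 * zc ^ 2 = 1 ∧
    (-yc ^ 2 - f2 * zc ^ 2) / (yc ^ 2 + f1 * zc ^ 2) = -1 ∧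
    -1 + (((D : ℝ) - 1) / 2) *
        ((1 + wm) - (1 + wm) * yc ^ 2 - (f2 + wm * f1) * zc ^ 2) = -1 := by
  subst hy hz hf
  have hΩ := sqrt_sq_add_mul_sqrt_sq_eq_one hlV hlt hf1
  exact ⟨hΩ, neg_sq_sub_mul_sq_div_eq_neg_one (hΩ ▸ one_ne_zero),
    decel_eq_neg_one_of_density_eq_one hΩ⟩

/-- the cosmological parameters at CP₆: the density parameter
`Ω_MG = y_c² + f₁ z_c² = 1`, the equation-of-state parameter
`w_MG = (−y_c² − f₂ z_c²)/(y_c² + f₁ z_c²) = −1`, and the deceleration parameter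
`q = −1 + ((D−1)/2)[(1+w_m) − (1+w_m)y_c² − (f₂ + w_m f₁)z_c²] = −1`. -/
theorem cosmological_parameters_CP6 (D : ℕ) (hD : 4 ≤ D) (wm lV lW f1 f2 : ℝ)
    (hlV : 0 ≤ lV) (hlt : lV < lW) (hf : f1 = f2) (hf1 : f1 < 0)
    (yc zc : ℝ)
    (hy : yc = Real.sqrt (lW / (lW - lV)))
    (hz : zc = Real.sqrt (lV / (|f1| * (lW - lV)))) :
    yc ^ 2 + f1 * zc ^ 2 = 1 ∧
    (-yc ^ 2 - f2 * zc ^ 2) / (yc ^ 2 + f1 * zc ^ 2) = -1 ∧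
    -1 + (((D : ℝ) - 1) / 2) *
        ((1 + wm) - (1 + wm) * yc ^ 2 - (f2 + wm * f1) * zc ^ 2) = -1 :=
  cosmological_parameters_CP6_general D wm lV lW f1 f2 hlV hlt hf hf1 yc zc hy hz
end
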